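/- arXiv:1405.3649 — 4 statements merged into one kernel-verified Lean document; each statement's English description precedes it below -/
import Mathlib

section
/- For every positive integer m, the limit as n → ∞ of (1/n²) · Σ_{k=1}^{n} Σ_{j=1}^{n} e^{m · min(j,k)/max(j,k)} equals (e^m − 1)/m. -/
open Filter Finset Real Topology

/-!
By symmetry the double sum is twice the sum over `j ≤ k`, minus the diagonal `n e^m`.
The row sum `∑_{j ≤ k} e^{mj/k}` is geometric with ratio `e^{m/k}`, hence asymptotic to
`k (e^m - 1) / m`, and rows of size `a_k ~ k L` add up to `∑_{k ≤ n} a_k ~ n² L / 2`.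
-/

theorem Finset.sum_sum_min_max_add_sum_diag {α M : Type*} [LinearOrder α] [AddCommMonoid M]
    (s : Finset α) (f : α → α → M) :
    ∑ k ∈ s, ∑ j ∈ s, f (min j k) (max j k) + ∑ k ∈ s, f k k =
      2 • ∑ k ∈ s, ∑ j ∈ s with j ≤ k, f j k := by
  have pointwise : ∀ j k, f (min j k) (max j k) + (if j = k then f j k else 0) =
      (if j ≤ k then f j k else 0) + (if k ≤ j then f k j else 0) := by
    intro j k
    rcases lt_trichotomy j k with h | rfl | h
    · simp [h.le, h.ne, h.not_ge]
    · simp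
    · simp [h.le, h.ne', h.not_ge]
  have diag : ∑ k ∈ s, f k k = ∑ k ∈ s, ∑ j ∈ s, if j = k then f j k else 0 := by
    simp
  have swap : ∑ k ∈ s, ∑ j ∈ s, (if k ≤ j then f k j else 0) =
      ∑ k ∈ s, ∑ j ∈ s, (if j ≤ k then f j k else 0) := sum_comm
  simp only [diag, two_nsmul, sum_filter]
  nth_rw 2 [← swap]
  simp only [← sum_add_distrib, pointwise]

theorem Finset.sum_sum_Icc_min_max_add_sum_diag {M : Type*} [AddCommMonoid M] (n : ℕ)
    (f : ℕ → ℕ → M) :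
    ∑ k ∈ Icc 1 n, ∑ j ∈ Icc 1 n, f (min j k) (max j k) + ∑ k ∈ Icc 1 n, f k k =
      2 • ∑ k ∈ Icc 1 n, ∑ j ∈ Icc 1 k, f j k := by
  rw [sum_sum_min_max_add_sum_diag]
  congr 1
  refine sum_congr rfl fun k hk => sum_congr ?_ fun _ _ => rfl
  ext j
  simp only [mem_filter, mem_Icc] at hk ⊢
  omega

theorem Finset.sum_Icc_one_eq_sum_range {M : Type*} [AddCommMonoid M] (f : ℕ → M) (n : ℕ) :
    ∑ k ∈ Icc 1 n, f k = ∑ i ∈ range n, f (i + 1) := by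
  rw [← Ico_add_one_right_eq_Icc, sum_Ico_eq_sum_range]
  simp [add_comm]

theorem Finset.sum_Icc_one_natCast (n : ℕ) : ∑ k ∈ Icc 1 n, (k : ℝ) = n * (n + 1) / 2 := by
  induction n with
  | zero => simp
  | succ n ih =>
    rw [sum_Icc_succ_top (by omega), ih]
    push_cast
    ring

theorem tendsto_sum_Icc_natCast_mul_div_sq {e : ℕ → ℝ} (h : Tendsto e atTop (𝓝 0)) :
    Tendsto (fun n : ℕ => (∑ k ∈ Icc 1 n, k * e k) / n ^ 2) atTop (𝓝 0) := by
  have cesaro : Tendsto (fun n : ℕ => (n⁻¹ : ℝ) * ∑ k ∈ Icc 1 n, |e k|) atTop (𝓝 0) := by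
    simp only [sum_Icc_one_eq_sum_range]
    simpa using (h.comp (tendsto_add_atTop_nat 1)).abs.cesaro
  refine squeeze_zero_norm' ?_ cesaro
  filter_upwards [eventually_gt_atTop 0] with n hn_pos
  have hn : (0 : ℝ) < n := by exact_mod_cast hn_pos
  calc ‖(∑ k ∈ Icc 1 n, k * e k) / n ^ 2‖
      ≤ (∑ k ∈ Icc 1 n, n * |e k|) / n ^ 2 := by
        rw [norm_div, norm_pow, norm_of_nonneg hn.le]
        gcongr
        refine (norm_sum_le _ _).trans (sum_le_sum fun k hk => ?_)
        rw [norm_mul, Real.norm_natCast, norm_eq_abs]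
        gcongr
        exact_mod_cast (mem_Icc.mp hk).2
    _ = (n : ℝ)⁻¹ * ∑ k ∈ Icc 1 n, |e k| := by
        rw [← mul_sum]
        field_simp

theorem tendsto_sum_Icc_div_sq_of_tendsto_div {a : ℕ → ℝ} {L : ℝ}
    (h : Tendsto (fun k : ℕ => a k / k) atTop (𝓝 L)) :
    Tendsto (fun n : ℕ => (∑ k ∈ Icc 1 n, a k) / n ^ 2) atTop (𝓝 (L / 2)) := by
  have main : Tendsto (fun n : ℕ => L / 2 * (1 + (n : ℝ)⁻¹)) atTop (𝓝 (L / 2)) := by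
    simpa using (tendsto_inv_atTop_zero.comp tendsto_natCast_atTop_atTop).const_add 1
      |>.const_mul (L / 2)
  have error := tendsto_sum_Icc_natCast_mul_div_sq (tendsto_sub_nhds_zero_iff.mpr h)
  rw [← add_zero (L / 2)]
  refine (main.add error).congr' ?_
  filter_upwards [eventually_ne_atTop 0] with n hn_ne
  have hn : (n : ℝ) ≠ 0 := by positivity
  have split : ∑ k ∈ Icc 1 n, a k =
      L * ∑ k ∈ Icc 1 n, (k : ℝ) + ∑ k ∈ Icc 1 n, k * (a k / k - L) := by
    rw [mul_sum, ← sum_add_distrib]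
    refine sum_congr rfl fun k hk => ?_
    have hk : (k : ℝ) ≠ 0 := by have := (mem_Icc.mp hk).1; positivity
    field_simp
    ring
  rw [split, sum_Icc_one_natCast]
  field_simp

theorem tendsto_natCast_mul_exp_div_sub_one (c : ℝ) :
    Tendsto (fun k : ℕ => k * (exp (c / k) - 1)) atTop (𝓝 c) := by
  -- the slope of `x ↦ exp (c * x)` at `0`, sampled at `x = 1 / k`
  have slope_lim := (hasDerivAt_iff_tendsto_slope.mp
    (((hasDerivAt_id (0 : ℝ)).const_mul c).exp))
  have inv_lim : Tendsto (fun k : ℕ => (k : ℝ)⁻¹) atTop (𝓝[≠] 0) :=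
    (tendsto_inv_atTop_nhdsGT_zero.comp tendsto_natCast_atTop_atTop).mono_right
      (nhdsGT_le_nhdsNE 0)
  convert slope_lim.comp inv_lim using 2
  · simp [slope_def_field, div_eq_mul_inv, mul_comm]
  · simp

theorem sum_Icc_exp_mul_div_mul_exp_div_sub_one (c : ℝ) {k : ℕ} (hk : k ≠ 0) :
    (∑ j ∈ Icc 1 k, exp (c * j / k)) * (exp (c / k) - 1) = exp (c / k) * (exp c - 1) := by
  have hpow : ∀ j : ℕ, exp (c * j / k) = exp (c / k) ^ j := fun j => by
    rw [← exp_nat_mul]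
    ring_nf
  have hk : (k : ℝ) ≠ 0 := by positivity
  simp only [hpow, sum_Icc_one_eq_sum_range, pow_succ', ← mul_sum, mul_assoc, geom_sum_mul]
  rw [← hpow, mul_div_cancel_right₀ _ hk]

theorem tendsto_sum_Icc_exp_mul_div_div {c : ℝ} (hc : c ≠ 0) :
    Tendsto (fun k : ℕ => (∑ j ∈ Icc 1 k, exp (c * j / k)) / k) atTop
      (𝓝 ((exp c - 1) / c)) := by
  have hexp : Tendsto (fun k : ℕ => exp (c / k) * (exp c - 1)) atTop (𝓝 (exp c - 1)) := by
    simpa using ((continuous_exp.tendsto 0).comp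
      (tendsto_const_div_atTop_nhds_zero_nat c)).mul_const (exp c - 1)
  refine (hexp.div (tendsto_natCast_mul_exp_div_sub_one c) hc).congr' ?_
  filter_upwards [eventually_ne_atTop 0] with k hk
  have hk' : (k : ℝ) ≠ 0 := by positivity
  have hne : exp (c / k) - 1 ≠ 0 := by
    rw [sub_ne_zero, Ne, exp_eq_one_iff]
    positivity
  simp only [Pi.div_apply, ← sum_Icc_exp_mul_div_mul_exp_div_sub_one c hk]
  field_simp

theorem norm_limit_exp (m : ℕ) (hm : 0 < m) :
    Tendsto (fun n : ℕ => (1 / (n : ℝ) ^ 2) *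
        ∑ k ∈ Finset.Icc 1 n, ∑ j ∈ Finset.Icc 1 n,
          Real.exp ((m : ℝ) * ((min j k : ℕ) : ℝ) / ((max j k : ℕ) : ℝ)))
      atTop (nhds ((Real.exp (m : ℝ) - 1) / (m : ℝ))) := by
  have rows := tendsto_sum_Icc_div_sq_of_tendsto_div
    (tendsto_sum_Icc_exp_mul_div_div (c := m) (by positivity))
  have diag := tendsto_const_div_atTop_nhds_zero_nat (exp m)
  have limit : 2 * ((exp m - 1) / m / 2) - 0 = (exp m - 1) / m := by ring
  rw [← limit]
  refine ((rows.const_mul 2).sub diag).congr' ?_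
  filter_upwards [eventually_ne_atTop 0] with n hn_ne
  have hsym := sum_sum_Icc_min_max_add_sum_diag n fun a b : ℕ => exp (m * (a : ℝ) / b)
  have hdiag : ∑ k ∈ Icc 1 n, exp (m * (k : ℝ) / k) = n * exp m := by
    rw [sum_congr rfl fun k hk => by
      rw [mul_div_assoc, div_self (by have := (mem_Icc.mp hk).1; positivity), mul_one]]
    simp
  simp only [hdiag, nsmul_eq_mul] at hsym
  have hn : (n : ℝ) ≠ 0 := by positivity
  field_simp
  linarith
end

section
/- The integral ∫₀¹ ln Γ(x) dx equals ln √(2π). -/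
/-!
By the reflection formula `Γ(x) Γ(1 - x) = π / sin (π x)`, and since `x ↦ 1 - x` preserves
`[0, 1]`, twice the integral is `∫₀¹ (log π - log sin (π x)) dx = log π + log 2`, using the
classical value `∫₀^π log sin = -π log 2`.
-/

open Real Set MeasureTheory intervalIntegral

namespace Real

theorem continuousOn_log_Gamma : ContinuousOn (fun x => log (Gamma x)) (Ioi 0) := by
  intro x hx
  refine ((differentiableAt_Gamma fun m => ?_).continuousAt.log
    (Gamma_pos_of_pos hx).ne').continuousWithinAt
  exact ((neg_nonpos.mpr m.cast_nonneg).trans_lt hx).ne'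

theorem log_Gamma_eq_log_Gamma_add_one_sub_log {x : ℝ} (hx : 0 < x) :
    log (Gamma x) = log (Gamma (x + 1)) - log x := by
  rw [Gamma_add_one hx.ne', log_mul hx.ne' (Gamma_pos_of_pos hx).ne']
  ring

theorem intervalIntegrable_log_Gamma {a b : ℝ} (ha : 0 ≤ a) (hb : 0 ≤ b) :
    IntervalIntegrable (fun x => log (Gamma x)) volume a b := by
  have hshift : ContinuousOn (fun x => log (Gamma (x + 1))) (uIcc a b) :=
    continuousOn_log_Gamma.comp (continuousOn_id.add continuousOn_const) fun x hx =>
      show 0 < x + 1 by linarith [le_min ha hb, hx.1]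
  refine (hshift.intervalIntegrable.sub intervalIntegrable_log').congr fun x hx => ?_
  exact (log_Gamma_eq_log_Gamma_add_one_sub_log ((le_min ha hb).trans_lt hx.1)).symm

theorem log_Gamma_add_log_Gamma_one_sub {x : ℝ} (hx₀ : 0 < x) (hx₁ : x < 1) :
    log (Gamma x) + log (Gamma (1 - x)) = log π - log (sin (π * x)) := by
  have hsin : 0 < sin (π * x) :=
    sin_pos_of_pos_of_lt_pi (mul_pos pi_pos hx₀) (by nlinarith [pi_pos])
  rw [← log_mul (Gamma_pos_of_pos hx₀).ne' (Gamma_pos_of_pos (sub_pos.2 hx₁)).ne',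
    Gamma_mul_Gamma_one_sub, log_div pi_ne_zero hsin.ne']

theorem integral_log_sin_pi_mul : ∫ x in (0 : ℝ)..1, log (sin (π * x)) = -log 2 := by
  rw [integral_comp_mul_left (fun x => log (sin x)) pi_ne_zero, mul_zero, mul_one,
    integral_log_sin_zero_pi, smul_eq_mul]
  field_simp

end Real

theorem integral_log_gamma :
    ∫ x in (0 : ℝ)..1, Real.log (Real.Gamma x) = Real.log (Real.sqrt (2 * π)) := by
  have hint := intervalIntegrable_log_Gamma le_rfl zero_le_one
  have hreflect :
      ∫ x in (0 : ℝ)..1, log (Gamma (1 - x)) = ∫ x in (0 : ℝ)..1, log (Gamma x) := by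
    simpa using integral_comp_sub_left (fun x => log (Gamma x)) (1 : ℝ) (a := 0) (b := 1)
  have hsum : 2 * ∫ x in (0 : ℝ)..1, log (Gamma x) = log π + log 2 := by
    calc 2 * ∫ x in (0 : ℝ)..1, log (Gamma x)
        = ∫ x in (0 : ℝ)..1, (log (Gamma x) + log (Gamma (1 - x))) := by
          rw [integral_add hint (by simpa using (hint.comp_sub_left 1).symm), hreflect, two_mul]
      _ = ∫ x in (0 : ℝ)..1, (log π - log (sin (π * x))) :=
          integral_congr_Ioo_of_le zero_le_one fun _ hx =>
            log_Gamma_add_log_Gamma_one_sub hx.1 hx.2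
      _ = log π + log 2 := by
          have hsin : IntervalIntegrable (fun x => log (sin (π * x))) volume 0 1 := by
            simpa [pi_ne_zero] using
              (intervalIntegrable_log_sin (a := 0) (b := π)).comp_mul_left (c := π)
          rw [integral_sub intervalIntegrable_const hsin, intervalIntegral.integral_const,
            integral_log_sin_pi_mul]
          simp
  rw [log_sqrt (by positivity), log_mul two_ne_zero pi_ne_zero]
  linarith
end

section
/- Let f : [0,1] → ℝ be Riemann integrable with |f(t)| ≤ 1 for all t, and suppose ∫₀¹ f(t)² dt = 1 while for infinitely many n there exist at least n/2 − 1 indices i ≤ n−1 with f(i/(n−1))·f(i/n) = −1 and f taking only values ±1 at these points. Then f is not Riemann integrable — i.e., no such Riemann integrable f exists. -/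
open Filter

/-- `HasRiemannIntegral f a b I` : for every `ε > 0` there is `δ > 0` such that every
tagged partition of `[a, b]` with mesh `< δ` has Riemann sum within `ε` of `I`. -/
def HasRiemannIntegral (f : ℝ → ℝ) (a b I : ℝ) : Prop :=
  ∀ ε > (0 : ℝ), ∃ δ > (0 : ℝ), ∀ (n : ℕ) (p : Fin (n + 1) → ℝ) (tag : Fin n → ℝ),
    Monotone p → p 0 = a → p (Fin.last n) = b →
    (∀ i : Fin n, p i.castSucc ≤ tag i ∧ tag i ≤ p i.succ) →
    (∀ i : Fin n, p i.succ - p i.castSucc < δ) →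
    |(∑ i : Fin n, f (tag i) * (p i.succ - p i.castSucc)) - I| < ε

/-!
If `f` were Riemann integrable on `[0, 1]`, the sum `Σ |f xᵢ - f yᵢ| / n` over any two choices
of tags `xᵢ, yᵢ ∈ [i/n, (i+1)/n]` would tend to `0`: it is the difference of two Riemann sums
with the same partition. Taking `xᵢ = i/(n-1)` and `yᵢ = i/n` for the at least `n/2 - 1`
indices `i` where `f` jumps from `±1` to `∓1`, each such term is `2`, so the sum is at least
`1 - 2/n`, which does not tend to `0`.
-/

open Set

/-- Choosing at each subinterval the tag where `f` is larger, resp. smaller, turns the difference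
of two Riemann sums into the oscillation sum. -/
theorem HasRiemannIntegral.sum_abs_sub_mul_lt {f : ℝ → ℝ} {a b I : ℝ}
    (hf : HasRiemannIntegral f a b I) {ε : ℝ} (hε : 0 < ε) :
    ∃ δ > 0, ∀ (n : ℕ) (p : Fin (n + 1) → ℝ) (x y : Fin n → ℝ),
      Monotone p → p 0 = a → p (Fin.last n) = b →
      (∀ i : Fin n, p i.castSucc ≤ x i ∧ x i ≤ p i.succ) →
      (∀ i : Fin n, p i.castSucc ≤ y i ∧ y i ≤ p i.succ) →
      (∀ i : Fin n, p i.succ - p i.castSucc < δ) →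
      ∑ i, |f (x i) - f (y i)| * (p i.succ - p i.castSucc) < ε := by
  obtain ⟨δ, hδ, hsum⟩ := hf (ε / 2) (half_pos hε)
  refine ⟨δ, hδ, fun n p x y hp hp0 hpn hx hy hmesh => ?_⟩
  set tmax : Fin n → ℝ := fun i => if f (y i) ≤ f (x i) then x i else y i
  set tmin : Fin n → ℝ := fun i => if f (y i) ≤ f (x i) then y i else x i
  have htmax : ∀ i, p i.castSucc ≤ tmax i ∧ tmax i ≤ p i.succ := fun i => by
    simp only [tmax]; split_ifs; exacts [hx i, hy i]
  have htmin : ∀ i, p i.castSucc ≤ tmin i ∧ tmin i ≤ p i.succ := fun i => by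
    simp only [tmin]; split_ifs; exacts [hy i, hx i]
  have hterm : ∀ i, |f (x i) - f (y i)| = f (tmax i) - f (tmin i) := fun i => by
    simp only [tmax, tmin]
    split_ifs with h
    · exact abs_of_nonneg (sub_nonneg.mpr h)
    · rw [abs_sub_comm]; exact abs_of_pos (sub_pos.mpr (not_le.mp h))
  have h₁ := abs_lt.mp (hsum n p tmax hp hp0 hpn htmax hmesh)
  have h₂ := abs_lt.mp (hsum n p tmin hp hp0 hpn htmin hmesh)
  simp only [hterm, sub_mul, Finset.sum_sub_distrib]
  linarith

theorem div_pred_mem_Icc {i n : ℕ} (hi : i < n) :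
    (i : ℝ) / (n - 1) ∈ Icc ((i : ℝ) / n) ((i + 1) / n) := by
  obtain ⟨m, rfl⟩ : ∃ m, n = m + 1 := Nat.exists_eq_succ_of_ne_zero (by omega)
  rcases Nat.eq_zero_or_pos m with rfl | hm
  · obtain rfl : i = 0 := by omega
    simp
  have hm' : (0 : ℝ) < m := by exact_mod_cast hm
  have him : (i : ℝ) ≤ m := by exact_mod_cast Nat.lt_succ_iff.mp hi
  push_cast
  rw [add_sub_cancel_right, Set.mem_Icc, div_le_div_iff₀ (by positivity) hm',
    div_le_div_iff₀ hm' (by positivity)]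
  constructor <;> nlinarith

theorem HasRiemannIntegral.sum_range_abs_sub_div_lt {f : ℝ → ℝ} {I : ℝ}
    (hf : HasRiemannIntegral f 0 1 I) {ε : ℝ} (hε : 0 < ε) :
    ∃ N : ℕ, ∀ n ≥ N, ∀ x y : ℕ → ℝ,
      (∀ i < n, x i ∈ Icc ((i : ℝ) / n) ((i + 1) / n)) →
      (∀ i < n, y i ∈ Icc ((i : ℝ) / n) ((i + 1) / n)) →
      (∑ i ∈ Finset.range n, |f (x i) - f (y i)|) / n < ε := by
  obtain ⟨δ, hδ, hsum⟩ := hf.sum_abs_sub_mul_lt hε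
  obtain ⟨N, hN⟩ := exists_nat_one_div_lt hδ
  refine ⟨N + 1, fun n hn x y hx hy => ?_⟩
  have hn0 : (0 : ℝ) < n := by exact_mod_cast Nat.lt_of_lt_of_le N.succ_pos hn
  have hstep : ∀ i : Fin n, ((i.succ : ℕ) : ℝ) / n - ((i.castSucc : ℕ) : ℝ) / n = 1 / n :=
    fun i => by simp only [Fin.val_succ, Fin.val_castSucc]; push_cast; ring
  have hmesh : 1 / (n : ℝ) < δ :=
    calc 1 / (n : ℝ) ≤ 1 / ((N : ℝ) + 1) := by
          gcongr; exact_mod_cast hn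
      _ < δ := hN
  have hcell : ∀ z : ℕ → ℝ, (∀ i < n, z i ∈ Icc ((i : ℝ) / n) ((i + 1) / n)) →
      ∀ i : Fin n, ((i.castSucc : ℕ) : ℝ) / n ≤ z i ∧ z i ≤ ((i.succ : ℕ) : ℝ) / n :=
    fun z hz i => by simpa using hz i i.isLt
  have := hsum n (fun j => (j : ℝ) / n) (fun i => x i) (fun i => y i)
    (fun j k hjk => div_le_div_of_nonneg_right (by exact_mod_cast hjk) hn0.le) (by simp)
    (by simp [hn0.ne']) (hcell x hx) (hcell y hy) (fun i => by rw [hstep]; exact hmesh)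
  rwa [Finset.sum_congr rfl fun i _ => by rw [hstep, mul_one_div], ← Finset.sum_div,
    Fin.sum_univ_eq_sum_range (fun i => |f (x i) - f (y i)|)] at this

theorem abs_sub_eq_two_of_mul_eq_neg_one {u v : ℝ} (hu : u = 1 ∨ u = -1) (huv : u * v = -1) :
    |u - v| = 2 := by
  rcases hu with rfl | rfl
  · rw [show v = -1 by linarith]; norm_num
  · rw [show v = 1 by linarith]; norm_num

theorem no_such_function_general (f : ℝ → ℝ) (I : ℝ)
    (hosc : ∀ N : ℕ, ∃ n : ℕ, N ≤ n ∧ ∃ S : Finset ℕ,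
      (n : ℝ) / 2 - 1 ≤ (S.card : ℝ) ∧
      ∀ i ∈ S, 1 ≤ i ∧ i ≤ n - 1 ∧
        f ((i : ℝ) / ((n : ℝ) - 1)) * f ((i : ℝ) / (n : ℝ)) = -1 ∧
        (f ((i : ℝ) / ((n : ℝ) - 1)) = 1 ∨ f ((i : ℝ) / ((n : ℝ) - 1)) = -1) ∧
        (f ((i : ℝ) / (n : ℝ)) = 1 ∨ f ((i : ℝ) / (n : ℝ)) = -1)) :
    ¬ HasRiemannIntegral f 0 1 I := by
  intro hf
  obtain ⟨N, hN⟩ := hf.sum_range_abs_sub_div_lt (ε := 1 / 2) (by norm_num)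
  obtain ⟨n, hn, S, hcard, hS⟩ := hosc (max N 4)
  have hn4 : (4 : ℝ) ≤ n := by exact_mod_cast (le_max_right N 4).trans hn
  have hSn : S ⊆ Finset.range n := fun i hi => Finset.mem_range.mpr (by have := hS i hi; omega)
  let x : ℕ → ℝ := fun i => if i ∈ S then (i : ℝ) / (n - 1) else i / n
  have hx : ∀ i < n, x i ∈ Icc ((i : ℝ) / n) ((i + 1) / n) := fun i hi => by
    by_cases hiS : i ∈ S
    · simpa [x, hiS] using div_pred_mem_Icc hi
    · simp only [x, hiS, if_false]
      exact ⟨le_rfl, by gcongr; linarith⟩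
  have hjump : ∀ i ∈ S, |f (x i) - f (i / n)| = 2 := fun i hi => by
    obtain ⟨-, -, hprod, hpm, -⟩ := hS i hi
    simpa [x, hi] using abs_sub_eq_two_of_mul_eq_neg_one hpm hprod
  have hlarge := hN n ((le_max_left N 4).trans hn) x (fun i => i / n) hx
    (fun i _ => ⟨le_rfl, by gcongr; linarith⟩)
  have hsmall : 2 * (S.card : ℝ) ≤ ∑ i ∈ Finset.range n, |f (x i) - f (i / n)| :=
    calc 2 * (S.card : ℝ) = ∑ i ∈ S, |f (x i) - f (i / n)| := by
          rw [Finset.sum_congr rfl hjump, Finset.sum_const, nsmul_eq_mul, mul_comm]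
      _ ≤ _ := Finset.sum_le_sum_of_subset_of_nonneg hSn fun _ _ _ => abs_nonneg _
  rw [div_lt_iff₀ (by linarith)] at hlarge
  linarith

theorem no_such_function (f : ℝ → ℝ) (I : ℝ)
    (hbd : ∀ t ∈ Set.Icc (0 : ℝ) 1, |f t| ≤ 1)
    (hsq : HasRiemannIntegral (fun x => f x ^ 2) 0 1 1)
    (hosc : ∀ N : ℕ, ∃ n : ℕ, N ≤ n ∧ ∃ S : Finset ℕ,
      (n : ℝ) / 2 - 1 ≤ (S.card : ℝ) ∧
      ∀ i ∈ S, 1 ≤ i ∧ i ≤ n - 1 ∧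
        f ((i : ℝ) / ((n : ℝ) - 1)) * f ((i : ℝ) / (n : ℝ)) = -1 ∧
        (f ((i : ℝ) / ((n : ℝ) - 1)) = 1 ∨ f ((i : ℝ) / ((n : ℝ) - 1)) = -1) ∧
        (f ((i : ℝ) / (n : ℝ)) = 1 ∨ f ((i : ℝ) / (n : ℝ)) = -1)) :
    ¬ HasRiemannIntegral f 0 1 I :=
  no_such_function_general f I hosc
end

section
/- For all n = 4k large enough, there is no Riemann integrable function f : [0,1] → ℝ with |f| ≤ 1 such that for every such n the n×n matrix with (i,j)-entry f(min(i,j)/max(i,j)) is a Hadamard matrix (i.e., has entries ±1 and satisfies A·Aᵀ = n·I). -/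
open Filter Matrix

/-- The symmetric matrix with `(i, j)`-entry `f (min (i+1) (j+1) / max (i+1) (j+1))`. -/
noncomputable def Afn (f : ℝ → ℝ) (n : ℕ) : Matrix (Fin n) (Fin n) ℝ :=
  fun i j => f (((min (i.1 + 1) (j.1 + 1) : ℕ) : ℝ) / ((max (i.1 + 1) (j.1 + 1) : ℕ) : ℝ))

/-! A symmetric real matrix with `A * A = n • 1` has all eigenvalues in `{√n, -√n}`, so its
trace is an integer multiple of `√n`. The trace of `A_{f,n}` is `n * f 1 = ±n`, hence `n` is a
perfect square. But `4k` and `4k + 4` are never both squares when `k > 0`. -/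

theorem Finset.exists_sum_eq_zsmul_of_forall_eq_or_eq_neg {ι M : Type*} [AddCommGroup M]
    {s : Finset ι} {x : ι → M} {a : M} (h : ∀ i ∈ s, x i = a ∨ x i = -a) :
    ∃ z : ℤ, ∑ i ∈ s, x i = z • a := by
  classical
  induction s using Finset.induction_on with
  | empty => exact ⟨0, by simp⟩
  | insert j s hj ih =>
    obtain ⟨z, hz⟩ := ih fun i hi ↦ h i (Finset.mem_insert_of_mem hi)
    rw [Finset.sum_insert hj, hz]
    rcases h j (Finset.mem_insert_self j s) with hx | hx
    · exact ⟨z + 1, by rw [hx, add_smul, one_smul, add_comm]⟩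
    · exact ⟨z - 1, by rw [hx, sub_smul, one_smul, neg_add_eq_sub]⟩

namespace Matrix.IsHermitian

variable {𝕜 ι : Type*} [RCLike 𝕜] [Fintype ι] [DecidableEq ι] {A : Matrix ι ι 𝕜}

lemma eigenvalues_mul_self_eq (hA : A.IsHermitian) {r : ℝ} (hA2 : A * A = (r : 𝕜) • 1)
    (i : ι) : hA.eigenvalues i * hA.eigenvalues i = r := by
  set v := ⇑(hA.eigenvectorBasis i)
  have hv : v ≠ 0 := (WithLp.ofLp_eq_zero 2).ne.2 <| hA.eigenvectorBasis.orthonormal.ne_zero i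
  have hAAv : (A * A) *ᵥ v = ((hA.eigenvalues i * hA.eigenvalues i : ℝ) : 𝕜) • v := by
    rw [← mulVec_mulVec, hA.mulVec_eigenvectorBasis, mulVec_smul, hA.mulVec_eigenvectorBasis,
      smul_smul, RCLike.real_smul_eq_coe_smul (K := 𝕜), RCLike.ofReal_mul]
  rw [hA2, smul_mulVec, one_mulVec] at hAAv
  exact_mod_cast (smul_left_injective 𝕜 hv hAAv).symm

lemma exists_int_trace_eq_mul_sqrt (hA : A.IsHermitian) {r : ℝ} (hA2 : A * A = (r : 𝕜) • 1) :
    ∃ z : ℤ, A.trace = ((z * √r : ℝ) : 𝕜) := by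
  have hμ : ∀ i ∈ Finset.univ, hA.eigenvalues i = √r ∨ hA.eigenvalues i = -√r := fun i _ ↦
    eq_or_eq_neg_of_abs_eq <| by
      rw [← hA.eigenvalues_mul_self_eq hA2 i, Real.sqrt_mul_self_eq_abs]
  obtain ⟨z, hz⟩ := Finset.exists_sum_eq_zsmul_of_forall_eq_or_eq_neg hμ
  exact ⟨z, by rw [hA.trace_eq_sum_eigenvalues, ← RCLike.ofReal_sum, hz, zsmul_eq_mul]⟩

end Matrix.IsHermitian

theorem Matrix.IsSymm.isSquare_card_of_mul_self {ι : Type*} [Fintype ι] [DecidableEq ι]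
    {A : Matrix ι ι ℝ} (hA : A.IsSymm) (hA2 : A * A = (Fintype.card ι : ℝ) • 1) {c : ℝ}
    (hdiag : ∀ i, A i i = c) (hc : c ^ 2 = 1) : IsSquare (Fintype.card ι) := by
  set n := Fintype.card ι
  obtain ⟨z, hz⟩ := (isHermitian_iff_isSymm.2 hA).exists_int_trace_eq_mul_sqrt (r := n) hA2
  have htrace : (n : ℝ) * c = z * √n := by
    refine Eq.trans ?_ hz
    simp [trace, hdiag, n]
  have hsq : (n : ℝ) * n = z ^ 2 * n := by
    have := congrArg (· ^ 2) htrace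
    simp only [mul_pow, hc, Real.sq_sqrt n.cast_nonneg] at this
    linarith
  rcases Nat.eq_zero_or_pos n with hn0 | hpos
  · exact ⟨0, hn0⟩
  · refine ⟨z.natAbs, ?_⟩
    have : (n : ℝ) = z ^ 2 := mul_right_cancel₀ (by positivity) hsq
    have : (n : ℤ) = z.natAbs * z.natAbs := by rw [Int.natAbs_mul_self', ← sq]; exact_mod_cast this
    exact_mod_cast this

theorem Nat.eq_zero_of_mul_self_add_four_eq_mul_self {m k : ℕ} (h : m * m + 4 = k * k) : m = 0 := by
  have hmk : m < k := Nat.mul_self_lt_mul_self_iff.1 (by omega)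
  rcases Nat.lt_or_ge (m + 1) k with hk | hk
  · nlinarith
  · have : k = m + 1 := by omega
    subst this
    ring_nf at h
    omega

theorem Afn_isSymm (f : ℝ → ℝ) (n : ℕ) : (Afn f n).IsSymm := by
  ext i j
  simp only [transpose_apply, Afn, min_comm, max_comm]

theorem Afn_apply_self (f : ℝ → ℝ) {n : ℕ} (i : Fin n) : Afn f n i i = f 1 := by
  simp only [Afn, min_self, max_self]
  exact congrArg f (div_self (by positivity))

theorem no_hadamard_realization :
    ¬ ∃ (f : ℝ → ℝ) (I : ℝ), HasRiemannIntegral f 0 1 I ∧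
        (∀ t ∈ Set.Icc (0 : ℝ) 1, |f t| ≤ 1) ∧
        ∃ N : ℕ, ∀ k : ℕ, 0 < k → N ≤ 4 * k →
          ((∀ i j : Fin (4 * k), Afn f (4 * k) i j = 1 ∨ Afn f (4 * k) i j = -1) ∧
            Afn f (4 * k) * (Afn f (4 * k))ᵀ = ((4 * k : ℕ) : ℝ) • (1 : Matrix (Fin (4 * k)) (Fin (4 * k)) ℝ)) := by
  rintro ⟨f, -, -, -, N, hN⟩
  have hsquare : ∀ k, 0 < k → N ≤ 4 * k → IsSquare (4 * k) := by
    intro k hk hNk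
    obtain ⟨hpm, hmul⟩ := hN k hk hNk
    have hf1 : f 1 ^ 2 = 1 :=
      sq_eq_one_iff.2 (Afn_apply_self f ⟨0, by omega⟩ ▸ hpm ⟨0, by omega⟩ ⟨0, by omega⟩)
    rw [(Afn_isSymm f _).eq] at hmul
    simpa using (Afn_isSymm f (4 * k)).isSquare_card_of_mul_self (by simpa using hmul)
      (Afn_apply_self f) hf1
  obtain ⟨m, hm⟩ := hsquare (N + 1) (by omega) (by omega)
  obtain ⟨m', hm'⟩ := hsquare (N + 2) (by omega) (by omega)
  have hm0 : m = 0 := Nat.eq_zero_of_mul_self_add_four_eq_mul_self (k := m') (by omega)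
  subst hm0
  omega
end
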